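/- Let φ: ℝ → ℝ be odd, C¹, with φ' nondecreasing and bounded on ℝ₊, and consider piecewise-affine continuous approximations φ_PWA of φ on partitions of ℝ₊ into m+1 consecutive intervals. Then the infimum over all such partitions and affine coefficients of the Lipschitz constant of ε = φ − φ_PWA on ℝ₊ equals ℓ(φ'(ℝ₊))/(2(m+1)), and it is attained by the partition uniformly dividing the image of φ' with slopes r_i = (sup_{int R_i} φ' + inf_{int R_i} φ')/2. -/

import Mathlib

/-! On each piece of a partition the error `φ - φPWA` has derivative `φ' - rᵢ`, so by the
converse mean value inequality an error with Lipschitz constant `η` forces `|φ' - rᵢ| ≤ η` on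
that piece: `φ'` oscillates by at most `2η` on each of the `m + 1` pieces, and since `φ'` is
monotone these oscillations add up to at least `ℓ(φ'(ℝ₊))`. Conversely, cutting `ℝ₊` where the
continuous `φ'` crosses the `m` equally spaced levels between `inf φ'` and `sup φ'` and taking
the midpoint slopes gives `|φ' - rᵢ| ≤ ℓ / (2 (m + 1))` on every piece; the mean value inequality
on each piece, glued across the breakpoints, bounds the Lipschitz constant of the error by the
same amount. -/

open Set

/-- The set of Lipschitz constants on `ℝ₊` of the error `φ − φPWA` achievable by
continuous piecewise-affine approximations of `φ` on a partition of `ℝ₊` into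
`m + 1` consecutive intervals. -/
def achievableLipConsts (φ : ℝ → ℝ) (m : ℕ) : Set ℝ :=
  {η : ℝ | ∃ (a : ℕ → ℝ) (r s : ℕ → ℝ) (φPWA : ℝ → ℝ),
    a 0 = 0 ∧ (∀ i < m, a i < a (i + 1)) ∧
    (∀ i < m, ∀ q ∈ Icc (a i) (a (i + 1)), φPWA q = r i * q + s i) ∧
    (∀ q ∈ Ici (a m), φPWA q = r m * q + s m) ∧
    ContinuousOn φPWA (Ici (0 : ℝ)) ∧
    (∀ q ∈ Ici (0 : ℝ), ∀ q' ∈ Ici (0 : ℝ),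
      |(φ q - φPWA q) - (φ q' - φPWA q')| ≤ η * |q - q'|)}

section Partition

variable {a : ℕ → ℝ} {m : ℕ}

def partitionPiece (a : ℕ → ℝ) (m i : ℕ) : Set ℝ :=
  if i < m then Icc (a i) (a (i + 1)) else Ici (a i)

lemma convex_partitionPiece (i : ℕ) : Convex ℝ (partitionPiece a m i) := by
  unfold partitionPiece
  split_ifs
  exacts [convex_Icc _ _, convex_Ici _]

lemma partitionPiece_of_lt {i : ℕ} (hi : i < m) : partitionPiece a m i = Icc (a i) (a (i + 1)) :=
  if_pos hi

lemma partitionPiece_self : partitionPiece a m m = Ici (a m) :=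
  if_neg (lt_irrefl m)

lemma partitionPiece_subset_Ici (i : ℕ) : partitionPiece a m i ⊆ Ici (a i) := by
  unfold partitionPiece
  split_ifs
  exacts [Icc_subset_Ici_self, subset_rfl]

lemma left_mem_partitionPiece (ha : ∀ i < m, a i < a (i + 1)) (i : ℕ) :
    a i ∈ partitionPiece a m i := by
  unfold partitionPiece
  split_ifs with hi
  exacts [left_mem_Icc.2 (ha i hi).le, self_mem_Ici]

lemma monotoneOn_Iic_of_lt_succ (ha : ∀ i < m, a i < a (i + 1)) : MonotoneOn a (Iic m) :=
  monotoneOn_of_le_add_one ordConnected_Iic fun i _ _ hi => (ha i hi).le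

lemma apply_zero_le_of_lt_succ (ha : ∀ i < m, a i < a (i + 1)) {i : ℕ} (hi : i ≤ m) :
    a 0 ≤ a i :=
  monotoneOn_Iic_of_lt_succ ha (mem_Iic.2 (Nat.zero_le m)) (mem_Iic.2 hi) (Nat.zero_le i)

lemma closure_interior_partitionPiece (ha : ∀ i < m, a i < a (i + 1)) (i : ℕ) :
    closure (interior (partitionPiece a m i)) = partitionPiece a m i := by
  unfold partitionPiece
  split_ifs with hi
  · rw [interior_Icc, closure_Ioo (ha i hi).ne]
  · rw [interior_Ici, closure_Ioi]

end Partition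

section PiecewiseAffine

variable {a : ℕ → ℝ} {m : ℕ}

def piecewiseAffine (a r : ℕ → ℝ) (m : ℕ) (q : ℝ) : ℝ :=
  r 0 * q + ∑ i ∈ Finset.range m, (r (i + 1) - r i) * max (q - a (i + 1)) 0

def piecewiseAffineIntercept (a r : ℕ → ℝ) (k : ℕ) : ℝ :=
  -∑ i ∈ Finset.range k, (r (i + 1) - r i) * a (i + 1)

lemma continuous_piecewiseAffine (a r : ℕ → ℝ) (m : ℕ) : Continuous (piecewiseAffine a r m) := by
  unfold piecewiseAffine
  fun_prop

lemma piecewiseAffine_eq_of_mem (ha : ∀ i < m, a i < a (i + 1)) (r : ℕ → ℝ) {k : ℕ}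
    (hk : k ≤ m) {q : ℝ} (hq : q ∈ partitionPiece a m k) :
    piecewiseAffine a r m q = r k * q + piecewiseAffineIntercept a r k := by
  have hmono := monotoneOn_Iic_of_lt_succ ha
  have hbelow : ∀ i ∈ Finset.range k, a (i + 1) ≤ q := by
    intro i hi
    rw [Finset.mem_range] at hi
    exact (hmono (mem_Iic.2 (by omega)) (mem_Iic.2 hk) hi).trans (partitionPiece_subset_Ici k hq)
  have habove : ∀ i ∈ Finset.Ico k m, q ≤ a (i + 1) := by
    intro i hi
    rw [Finset.mem_Ico] at hi
    rw [partitionPiece_of_lt (hi.1.trans_lt hi.2)] at hq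
    exact hq.2.trans (hmono (mem_Iic.2 (by omega)) (mem_Iic.2 (by omega)) (by omega))
  unfold piecewiseAffine piecewiseAffineIntercept
  rw [← Finset.sum_range_add_sum_Ico _ hk,
    Finset.sum_congr rfl fun i hi => by rw [max_eq_left (sub_nonneg.2 (hbelow i hi))],
    Finset.sum_eq_zero (s := Finset.Ico k m) fun i hi => by
      rw [max_eq_right (sub_nonpos.2 (habove i hi)), mul_zero]]
  simp only [mul_sub, Finset.sum_sub_distrib, add_zero]
  rw [← Finset.sum_mul, Finset.sum_range_sub]
  ring

end PiecewiseAffine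

lemma abs_sub_le_mul_union {g : ℝ → ℝ} {η v : ℝ} {s t : Set ℝ} (hs : IsGreatest s v)
    (ht : IsLeast t v) (hgs : ∀ q ∈ s, ∀ q' ∈ s, |g q - g q'| ≤ η * |q - q'|)
    (hgt : ∀ q ∈ t, ∀ q' ∈ t, |g q - g q'| ≤ η * |q - q'|) :
    ∀ q ∈ s ∪ t, ∀ q' ∈ s ∪ t, |g q - g q'| ≤ η * |q - q'| := by
  have hacross : ∀ x ∈ s, ∀ y ∈ t, |g x - g y| ≤ η * |x - y| := by
    intro x hx y hy
    have hxv : x ≤ v := hs.2 hx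
    have hvy : v ≤ y := ht.2 hy
    calc |g x - g y| ≤ |g x - g v| + |g v - g y| := abs_sub_le _ _ _
      _ ≤ η * |x - v| + η * |v - y| := add_le_add (hgs x hx v hs.1) (hgt v ht.1 y hy)
      _ = η * |x - y| := by
        rw [abs_of_nonpos (sub_nonpos.2 hxv), abs_of_nonpos (sub_nonpos.2 hvy),
          abs_of_nonpos (sub_nonpos.2 (hxv.trans hvy))]
        ring
  rintro q (hq | hq) q' (hq' | hq')
  · exact hgs q hq q' hq'
  · exact hacross q hq q' hq'
  · rw [abs_sub_comm, abs_sub_comm q]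
    exact hacross q' hq' q hq
  · exact hgt q hq q' hq'

lemma abs_sub_le_mul_of_partitionPiece {a : ℕ → ℝ} {m : ℕ} (ha : ∀ i < m, a i < a (i + 1))
    {g : ℝ → ℝ} {η : ℝ}
    (hg : ∀ i ≤ m, ∀ q ∈ partitionPiece a m i, ∀ q' ∈ partitionPiece a m i,
      |g q - g q'| ≤ η * |q - q'|) :
    ∀ q ∈ Ici (a 0), ∀ q' ∈ Ici (a 0), |g q - g q'| ≤ η * |q - q'| := by
  have hle : ∀ k ≤ m, a 0 ≤ a k := fun k hk => apply_zero_le_of_lt_succ ha hk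
  have hIcc : ∀ k ≤ m, ∀ q ∈ Icc (a 0) (a k), ∀ q' ∈ Icc (a 0) (a k),
      |g q - g q'| ≤ η * |q - q'| := by
    intro k hk
    induction k with
    | zero =>
      intro q hq q' hq'
      rw [le_antisymm hq.2 hq.1, le_antisymm hq'.2 hq'.1]
      simp
    | succ k ih =>
      have hkm : k < m := hk
      rw [← Icc_union_Icc_eq_Icc (hle k hkm.le) (ha k hkm).le]
      refine abs_sub_le_mul_union (isGreatest_Icc (hle k hkm.le)) (isLeast_Icc (ha k hkm).le)
        (ih hkm.le) ?_
      simpa only [partitionPiece_of_lt hkm] using hg k hkm.le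
  rw [← Icc_union_Ici_eq_Ici (hle m le_rfl)]
  exact abs_sub_le_mul_union (isGreatest_Icc (hle m le_rfl)) isLeast_Ici (hIcc m le_rfl)
    (by simpa only [partitionPiece_self] using hg m le_rfl)

section Derivative

variable {φ F : ℝ → ℝ} {c d η : ℝ}

lemma hasDerivAt_sub_affine {x : ℝ} (hφ : DifferentiableAt ℝ φ x) :
    HasDerivAt (fun y => φ y - (c * y + d)) (deriv φ x - c) x := by
  have h := hφ.hasDerivAt.sub (((hasDerivAt_id' x).const_mul c).add_const d)
  rw [mul_one] at h
  exact h

lemma abs_sub_le_mul_of_abs_deriv_sub_le {s : Set ℝ} (hφ : Differentiable ℝ φ)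
    (hs : Convex ℝ s) (hF : ∀ q ∈ s, F q = c * q + d) (hbound : ∀ x ∈ s, |deriv φ x - c| ≤ η) :
    ∀ q ∈ s, ∀ q' ∈ s, |(φ q - F q) - (φ q' - F q')| ≤ η * |q - q'| := by
  intro q hq q' hq'
  have hderiv : ∀ x ∈ s, HasDerivWithinAt (fun y => φ y - F y) (deriv φ x - c) s x :=
    fun x hx => (hasDerivAt_sub_affine (hφ x)).hasDerivWithinAt.congr
      (fun y hy => by rw [hF y hy]) (by rw [hF x hx])
  simpa only [Real.norm_eq_abs] using hs.norm_image_sub_le_of_norm_hasDerivWithin_le hderiv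
    (by simpa only [Real.norm_eq_abs] using hbound) hq' hq

lemma abs_deriv_sub_le_of_abs_sub_le {x : ℝ} (hη : 0 ≤ η) (hφ : DifferentiableAt ℝ φ x)
    (hF : ∀ᶠ y in nhds x, F y = c * y + d)
    (hlip : ∀ᶠ y in nhds x, |(φ y - F y) - (φ x - F x)| ≤ η * |y - x|) :
    |deriv φ x - c| ≤ η := by
  have hderiv : HasDerivAt (fun y => φ y - F y) (deriv φ x - c) x :=
    (hasDerivAt_sub_affine hφ).congr_of_eventuallyEq (by filter_upwards [hF] with y hy; rw [hy])
  simpa only [Real.norm_eq_abs] using hderiv.le_of_lip' hη hlip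

end Derivative

section Achievable

variable {φ : ℝ → ℝ} {m : ℕ} {η : ℝ}

theorem exists_abs_deriv_sub_le_of_mem_achievableLipConsts (hφ : ContDiff ℝ 1 φ)
    (hη : η ∈ achievableLipConsts φ m) :
    ∃ a r : ℕ → ℝ, a 0 = 0 ∧ (∀ i < m, a i < a (i + 1)) ∧
      ∀ i ≤ m, ∀ x ∈ partitionPiece a m i, |deriv φ x - r i| ≤ η := by
  obtain ⟨a, r, s, F, ha0, ha, hIcc, hIci, -, hlip⟩ := hη
  have hη0 : 0 ≤ η := by
    simpa using (abs_nonneg _).trans (hlip 1 (mem_Ici.2 zero_le_one) 0 self_mem_Ici)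
  have hF : ∀ i ≤ m, ∀ q ∈ partitionPiece a m i, F q = r i * q + s i := by
    intro i hi q hq
    rcases hi.lt_or_eq with hi | rfl
    · exact hIcc i hi q (by rwa [partitionPiece_of_lt hi] at hq)
    · exact hIci q (by rwa [partitionPiece_self] at hq)
  refine ⟨a, r, ha0, ha, fun i hi => ?_⟩
  have hai : 0 ≤ a i := ha0 ▸ apply_zero_le_of_lt_succ ha hi
  have hinterior : ∀ x ∈ interior (partitionPiece a m i), |deriv φ x - r i| ≤ η := by
    intro x hx
    have hx0 : 0 < x := hai.trans_lt <| by
      simpa using interior_mono (partitionPiece_subset_Ici i) hx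
    refine abs_deriv_sub_le_of_abs_sub_le (F := F) (d := s i) hη0
      ((hφ.differentiable one_ne_zero) x) ?_ ?_
    · filter_upwards [isOpen_interior.mem_nhds hx] with y hy using hF i hi y (interior_subset hy)
    · filter_upwards [Ioi_mem_nhds hx0] with y hy
      exact hlip y (mem_Ici.2 (le_of_lt hy)) x (mem_Ici.2 hx0.le)
  have hclosed : IsClosed {x | |deriv φ x - r i| ≤ η} :=
    isClosed_le ((hφ.continuous_deriv le_rfl).sub continuous_const).abs continuous_const
  rw [← closure_interior_partitionPiece ha i]
  exact fun x hx => closure_minimal hinterior hclosed hx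

lemma abs_sub_piecewiseAffine_le (hφ : Differentiable ℝ φ) {a r : ℕ → ℝ}
    (ha : ∀ i < m, a i < a (i + 1))
    (hr : ∀ i ≤ m, ∀ x ∈ partitionPiece a m i, |deriv φ x - r i| ≤ η) :
    ∀ q ∈ Ici (a 0), ∀ q' ∈ Ici (a 0),
      |(φ q - piecewiseAffine a r m q) - (φ q' - piecewiseAffine a r m q')| ≤ η * |q - q'| :=
  abs_sub_le_mul_of_partitionPiece ha fun i hi =>
    abs_sub_le_mul_of_abs_deriv_sub_le hφ (convex_partitionPiece i)
      (fun _ => piecewiseAffine_eq_of_mem ha r hi) (hr i hi)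

theorem mem_achievableLipConsts_of_abs_deriv_sub_le (hφ : Differentiable ℝ φ) {a r : ℕ → ℝ}
    (ha0 : a 0 = 0) (ha : ∀ i < m, a i < a (i + 1))
    (hr : ∀ i ≤ m, ∀ x ∈ partitionPiece a m i, |deriv φ x - r i| ≤ η) :
    η ∈ achievableLipConsts φ m :=
  ⟨a, r, piecewiseAffineIntercept a r, piecewiseAffine a r m, ha0, ha,
    fun i hi q hq => piecewiseAffine_eq_of_mem ha r hi.le (by rwa [partitionPiece_of_lt hi]),
    fun q hq => piecewiseAffine_eq_of_mem ha r le_rfl (by rwa [partitionPiece_self]),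
    (continuous_piecewiseAffine a r m).continuousOn,
    ha0 ▸ abs_sub_piecewiseAffine_le hφ ha hr⟩

end Achievable

section MonotoneOnPartition

variable {f : ℝ → ℝ} {a : ℕ → ℝ} {m : ℕ}

lemma sSup_image_sub_le_of_abs_sub_le (hmono : MonotoneOn f (Ici (a 0)))
    (ha : ∀ i < m, a i < a (i + 1)) {r : ℕ → ℝ} {η : ℝ}
    (hr : ∀ i ≤ m, ∀ x ∈ partitionPiece a m i, |f x - r i| ≤ η) :
    sSup (f '' Ici (a 0)) - f (a 0) ≤ 2 * (m + 1) * η := by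
  have hosc : ∀ i ≤ m, ∀ x ∈ partitionPiece a m i, ∀ y ∈ partitionPiece a m i,
      f y - f x ≤ 2 * η := by
    intro i hi x hx y hy
    have hx' := abs_le.1 (hr i hi x hx)
    have hy' := abs_le.1 (hr i hi y hy)
    linarith
  have hleft := left_mem_partitionPiece ha
  have hchain : ∀ k ≤ m, f (a k) ≤ f (a 0) + 2 * k * η := by
    intro k hk
    induction k with
    | zero => simp
    | succ k ih =>
      have hkm : k < m := hk
      have hstep := hosc k hkm.le (a k) (hleft k) (a (k + 1))
        (by rw [partitionPiece_of_lt hkm]; exact right_mem_Icc.2 (ha k hkm).le)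
      have := ih hkm.le
      push_cast
      linarith
  have hη : 0 ≤ η := (abs_nonneg _).trans (hr m le_rfl (a m) (hleft m))
  have ham : a 0 ≤ a m := apply_zero_le_of_lt_succ ha le_rfl
  have htop : ∀ x ∈ Ici (a 0), f x ≤ f (a m) + 2 * η := by
    intro x hx
    rcases le_total x (a m) with hxm | hmx
    · linarith [hmono hx (mem_Ici.2 ham) hxm]
    · linarith [hosc m le_rfl (a m) (hleft m) x (by rwa [partitionPiece_self])]
  have hsup : sSup (f '' Ici (a 0)) ≤ f (a m) + 2 * η :=
    csSup_le (nonempty_Ici.image f) (forall_mem_image.2 htop)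
  linarith [hchain m le_rfl]

lemma isGLB_image_partitionPiece (hmono : MonotoneOn f (Ici (a 0)))
    (ha : ∀ i < m, a i < a (i + 1)) {i : ℕ} (hi : i ≤ m) :
    IsGLB (f '' partitionPiece a m i) (f (a i)) := by
  have hai : a 0 ≤ a i := apply_zero_le_of_lt_succ ha hi
  refine IsLeast.isGLB ⟨mem_image_of_mem f (left_mem_partitionPiece ha i), ?_⟩
  rintro _ ⟨x, hx, rfl⟩
  have hx' : a i ≤ x := partitionPiece_subset_Ici i hx
  exact hmono (mem_Ici.2 hai) (mem_Ici.2 (hai.trans hx')) hx'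

lemma isLUB_image_partitionPiece_of_lt (hmono : MonotoneOn f (Ici (a 0)))
    (ha : ∀ i < m, a i < a (i + 1)) {i : ℕ} (hi : i < m) :
    IsLUB (f '' partitionPiece a m i) (f (a (i + 1))) := by
  have hai : a 0 ≤ a i := apply_zero_le_of_lt_succ ha hi.le
  rw [partitionPiece_of_lt hi]
  refine IsGreatest.isLUB ⟨mem_image_of_mem f (right_mem_Icc.2 (ha i hi).le), ?_⟩
  rintro _ ⟨x, hx, rfl⟩
  exact hmono (mem_Ici.2 (hai.trans hx.1)) (mem_Ici.2 (hai.trans (hx.1.trans hx.2))) hx.2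

lemma isLUB_image_partitionPiece_self (hmono : MonotoneOn f (Ici (a 0)))
    (hbdd : BddAbove (f '' Ici (a 0))) (ha : ∀ i < m, a i < a (i + 1)) :
    IsLUB (f '' partitionPiece a m m) (sSup (f '' Ici (a 0))) := by
  have ham : a 0 ≤ a m := apply_zero_le_of_lt_succ ha le_rfl
  rw [partitionPiece_self]
  refine ⟨forall_mem_image.2 fun x hx =>
    le_csSup hbdd (mem_image_of_mem f (mem_Ici.2 (ham.trans hx))), fun b hb => ?_⟩
  refine csSup_le (nonempty_Ici.image f) (forall_mem_image.2 fun x hx => ?_)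
  rcases le_total x (a m) with hxm | hmx
  · exact (hmono hx (mem_Ici.2 ham) hxm).trans (hb (mem_image_of_mem f self_mem_Ici))
  · exact hb (mem_image_of_mem f hmx)

lemma isLUB_image_partitionPiece_of_uniform (hmono : MonotoneOn f (Ici 0))
    (hbdd : BddAbove (f '' Ici 0)) (ha0 : a 0 = 0) (ha : ∀ i < m, a i < a (i + 1)) {h : ℝ}
    (hfa : ∀ i ≤ m, f (a i) = f 0 + i * h) (hS : sSup (f '' Ici 0) - f 0 = (m + 1) * h)
    {i : ℕ} (hi : i ≤ m) :
    IsLUB (f '' partitionPiece a m i) (f 0 + (i + 1) * h) := by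
  rw [← ha0] at hmono hbdd
  rcases hi.lt_or_eq with hi | rfl
  · convert isLUB_image_partitionPiece_of_lt hmono ha hi using 1
    rw [hfa (i + 1) hi]
    push_cast
    ring
  · convert isLUB_image_partitionPiece_self hmono hbdd ha using 1
    rw [ha0]
    linarith

lemma image_partitionPiece_subset_closure_image_interior (hf : Continuous f)
    (ha : ∀ i < m, a i < a (i + 1)) (i : ℕ) :
    f '' partitionPiece a m i ⊆ closure (f '' interior (partitionPiece a m i)) := by
  conv_lhs => rw [← closure_interior_partitionPiece ha i]
  exact image_closure_subset_closure_image hf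

lemma csSup_image_interior_partitionPiece (hf : Continuous f) (ha : ∀ i < m, a i < a (i + 1))
    {i : ℕ} {y : ℝ} (hy : IsLUB (f '' partitionPiece a m i) y) :
    sSup (f '' interior (partitionPiece a m i)) = y := by
  have h := (isLUB_iff_of_subset_of_subset_closure (image_mono interior_subset)
    (image_partitionPiece_subset_closure_image_interior hf ha i)).2 hy
  exact h.csSup_eq h.nonempty

lemma csInf_image_interior_partitionPiece (hf : Continuous f) (ha : ∀ i < m, a i < a (i + 1))
    {i : ℕ} {y : ℝ} (hy : IsGLB (f '' partitionPiece a m i) y) :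
    sInf (f '' interior (partitionPiece a m i)) = y := by
  have h := (isGLB_iff_of_subset_of_subset_closure (image_mono interior_subset)
    (image_partitionPiece_subset_closure_image_interior hf ha i)).2 hy
  exact h.csInf_eq h.nonempty

lemma exists_uniform_partition (hf : Continuous f) (hmono : MonotoneOn f (Ici 0))
    (hbdd : BddAbove (f '' Ici 0)) (m : ℕ) :
    ∃ a : ℕ → ℝ, a 0 = 0 ∧ (∀ i < m, a i < a (i + 1)) ∧
      ∀ i ≤ m, f (a i) = f 0 + i * ((sSup (f '' Ici 0) - f 0) / (m + 1)) := by
  set S := sSup (f '' Ici 0)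
  set h := (S - f 0) / (m + 1)
  have hle : ∀ x ∈ Ici (0 : ℝ), f x ≤ S := fun x hx => le_csSup hbdd (mem_image_of_mem f hx)
  rcases (hle 0 self_mem_Ici).eq_or_lt with hS | hS
  · have hh : h = 0 := by simp [h, hS]
    refine ⟨fun i => i, Nat.cast_zero, fun i _ => by push_cast; linarith, fun i _ => ?_⟩
    rw [hh, mul_zero, add_zero]
    exact le_antisymm (hS ▸ hle _ (mem_Ici.2 (Nat.cast_nonneg i)))
      (hmono self_mem_Ici (mem_Ici.2 (Nat.cast_nonneg i)) (Nat.cast_nonneg i))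
  · have hh : 0 < h := div_pos (sub_pos.2 hS) (by positivity)
    -- the last clause makes the chosen point for `i = 0` the origin itself
    have hreach : ∀ i ≤ m, ∃ x ∈ Ici (0 : ℝ), f x = f 0 + i * h ∧ (i = 0 → x = 0) := by
      intro i hi
      rcases Nat.eq_zero_or_pos i with rfl | hi0
      · exact ⟨0, self_mem_Ici, by simp, fun _ => rfl⟩
      have hlt : f 0 + i * h < S := by
        have hmh : ((m : ℝ) + 1) * h = S - f 0 := mul_div_cancel₀ _ (by positivity)
        have : (i : ℝ) * h < (m + 1) * h :=
          mul_lt_mul_of_pos_right (by exact_mod_cast Nat.lt_succ_of_le hi) hh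
        linarith
      obtain ⟨_, ⟨b, hb, rfl⟩, hbt⟩ := exists_lt_of_lt_csSup (nonempty_Ici.image f) hlt
      obtain ⟨x, hx, hfx⟩ := intermediate_value_Icc hb hf.continuousOn
        ⟨le_add_of_nonneg_right (by positivity), hbt.le⟩
      exact ⟨x, hx.1, hfx, fun h0 => absurd h0 hi0.ne'⟩
    choose! x hx0 hfx hx_zero using hreach
    refine ⟨x, hx_zero 0 (Nat.zero_le m) rfl, fun i hi => ?_, hfx⟩
    refine hmono.reflect_lt (hx0 i hi.le) (hx0 (i + 1) hi) ?_
    rw [hfx i hi.le, hfx (i + 1) hi]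
    push_cast
    linarith

end MonotoneOnPartition

theorem div_le_of_mem_achievableLipConsts {φ : ℝ → ℝ} {m : ℕ} {η : ℝ} (hφ : ContDiff ℝ 1 φ)
    (hmono : MonotoneOn (deriv φ) (Ici (0 : ℝ))) (hη : η ∈ achievableLipConsts φ m) :
    (sSup (deriv φ '' Ici (0 : ℝ)) - deriv φ 0) / (2 * (m + 1)) ≤ η := by
  obtain ⟨a, r, ha0, ha, hr⟩ := exists_abs_deriv_sub_le_of_mem_achievableLipConsts hφ hη
  have := sSup_image_sub_le_of_abs_sub_le (ha0 ▸ hmono) ha hr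
  rw [ha0] at this
  rw [div_le_iff₀ (by positivity)]
  linarith

theorem uniform_partition_is_optimal_general
    (φ : ℝ → ℝ) (hφ : ContDiff ℝ 1 φ)
    (hmono : MonotoneOn (deriv φ) (Ici (0 : ℝ)))
    (hbdd : BddAbove (deriv φ '' Ici (0 : ℝ)))
    (m : ℕ) (L : ℝ)
    (hL : L = sSup (deriv φ '' Ici (0 : ℝ)) - sInf (deriv φ '' Ici (0 : ℝ))) :
    sInf (achievableLipConsts φ m) = L / (2 * (m + 1)) ∧
    (∃ (a : ℕ → ℝ) (r s : ℕ → ℝ) (φPWA : ℝ → ℝ) (R : ℕ → Set ℝ),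
      a 0 = 0 ∧ (∀ i < m, a i < a (i + 1)) ∧
      (∀ i, R i = if i < m then Icc (a i) (a (i + 1)) else Ici (a i)) ∧
      (∀ i ≤ m,
        sSup (deriv φ '' interior (R i)) - sInf (deriv φ '' interior (R i)) = L / (m + 1)) ∧
      (∀ i ≤ m,
        r i = (sSup (deriv φ '' interior (R i)) + sInf (deriv φ '' interior (R i))) / 2) ∧
      (∀ i ≤ m, ∀ q ∈ R i, φPWA q = r i * q + s i) ∧
      ContinuousOn φPWA (Ici (0 : ℝ)) ∧
      (∀ q ∈ Ici (0 : ℝ), ∀ q' ∈ Ici (0 : ℝ),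
        |(φ q - φPWA q) - (φ q' - φPWA q')| ≤ (L / (2 * (m + 1))) * |q - q'|)) := by
  have hD : Continuous (deriv φ) := hφ.continuous_deriv le_rfl
  have hdiff : Differentiable ℝ φ := hφ.differentiable one_ne_zero
  have hL0 : L = sSup (deriv φ '' Ici 0) - deriv φ 0 := by
    rw [hL, IsLeast.csInf_eq ⟨mem_image_of_mem _ self_mem_Ici,
      forall_mem_image.2 fun x hx => hmono self_mem_Ici hx hx⟩]
  obtain ⟨a, ha0, ha, hDa⟩ := exists_uniform_partition hD hmono hbdd m
  rw [← hL0] at hDa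
  have hwidth : sSup (deriv φ '' Ici 0) - deriv φ 0 = (m + 1) * (L / (m + 1)) := by
    rw [← hL0, mul_div_cancel₀ _ (by positivity)]
  have hLUB := fun i (hi : i ≤ m) =>
    isLUB_image_partitionPiece_of_uniform hmono hbdd ha0 ha hDa hwidth hi
  have hGLB := fun i (hi : i ≤ m) => hDa i hi ▸ isGLB_image_partitionPiece (ha0 ▸ hmono) ha hi
  have hsup := fun i hi => csSup_image_interior_partitionPiece hD ha (hLUB i hi)
  have hinf := fun i hi => csInf_image_interior_partitionPiece hD ha (hGLB i hi)
  set r : ℕ → ℝ := fun i => (sSup (deriv φ '' interior (partitionPiece a m i)) +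
    sInf (deriv φ '' interior (partitionPiece a m i))) / 2
  have hr : ∀ i ≤ m, ∀ x ∈ partitionPiece a m i, |deriv φ x - r i| ≤ L / (2 * (m + 1)) := by
    intro i hi x hx
    have hup := (hLUB i hi).1 (mem_image_of_mem _ hx)
    have hlo := (hGLB i hi).1 (mem_image_of_mem _ hx)
    have hhalf : L / (2 * (m + 1)) = L / (m + 1) / 2 := by rw [div_div, mul_comm]
    simp only [r, hsup i hi, hinf i hi, hhalf, abs_le]
    constructor <;> linarith
  have hmem := mem_achievableLipConsts_of_abs_deriv_sub_le hdiff ha0 ha hr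
  have hlower : ∀ η ∈ achievableLipConsts φ m, L / (2 * (m + 1)) ≤ η :=
    fun η hη => hL0 ▸ div_le_of_mem_achievableLipConsts hφ hmono hη
  refine ⟨le_antisymm (csInf_le ⟨_, hlower⟩ hmem) (le_csInf ⟨_, hmem⟩ hlower),
    a, r, piecewiseAffineIntercept a r, piecewiseAffine a r m, partitionPiece a m, ha0, ha,
    fun i => rfl,
    fun i hi => by rw [hsup i hi, hinf i hi]; ring, fun i hi => rfl,
    fun i hi q hq => piecewiseAffine_eq_of_mem ha r hi hq,
    (continuous_piecewiseAffine a r m).continuousOn,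
    ha0 ▸ abs_sub_piecewiseAffine_le hdiff ha hr⟩

theorem uniform_partition_is_optimal
    (φ : ℝ → ℝ) (hodd : Odd φ) (hφ : ContDiff ℝ 1 φ)
    (hmono : MonotoneOn (deriv φ) (Ici (0 : ℝ)))
    (hbdd : BddAbove (deriv φ '' Ici (0 : ℝ)))
    (m : ℕ) (L : ℝ)
    (hL : L = sSup (deriv φ '' Ici (0 : ℝ)) - sInf (deriv φ '' Ici (0 : ℝ))) :
    sInf (achievableLipConsts φ m) = L / (2 * (m + 1)) ∧
    (∃ (a : ℕ → ℝ) (r s : ℕ → ℝ) (φPWA : ℝ → ℝ) (R : ℕ → Set ℝ),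
      a 0 = 0 ∧ (∀ i < m, a i < a (i + 1)) ∧
      (∀ i, R i = if i < m then Icc (a i) (a (i + 1)) else Ici (a i)) ∧
      (∀ i ≤ m,
        sSup (deriv φ '' interior (R i)) - sInf (deriv φ '' interior (R i)) = L / (m + 1)) ∧
      (∀ i ≤ m,
        r i = (sSup (deriv φ '' interior (R i)) + sInf (deriv φ '' interior (R i))) / 2) ∧
      (∀ i ≤ m, ∀ q ∈ R i, φPWA q = r i * q + s i) ∧
      ContinuousOn φPWA (Ici (0 : ℝ)) ∧
      (∀ q ∈ Ici (0 : ℝ), ∀ q' ∈ Ici (0 : ℝ),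
        |(φ q - φPWA q) - (φ q' - φPWA q')| ≤ (L / (2 * (m + 1))) * |q - q'|)) :=
  uniform_partition_is_optimal_general φ hφ hmono hbdd m L hL
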